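/- Let D₁, D₂, K_r, K_h be positive integers and B_r̃, B_h > 0. Let CS_r : ℝ^{D₁} → ℝ^{K_r} and CS_h : ℝ^{D₂} → ℝ^{K_h} be independent CountSketches following the random CountSketch model. Fix vectors r̃^q, r̃^i ∈ ℝ^{D₁} with ‖r̃^q‖₂ ≤ B_r̃ and ‖r̃^i‖₂ ≤ B_r̃, and vectors h^q, h^i ∈ ℝ^{D₂} with ‖h^q‖₂ ≤ B_h and ‖h^i‖₂ ≤ B_h. Define the RH-channel estimator Î_RH = ⟨CS_r(r̃^q), CS_r(r̃^i)⟩ · ⟨CS_h(h^q), CS_h(h^i)⟩. Then, with α = ⟨r̃^q, r̃^i⟩ and β = ⟨h^q, h^i⟩, Var[Î_RH] ≤ V_r·V_h + α²·V_h + β²·V_r with V_r = (‖r̃^q‖₂²‖r̃^i‖₂² + α²)/K_r and V_h = (‖h^q‖₂²‖h^i‖₂² + β²)/K_h; in particular Var[Î_RH] ≤ B_r̃⁴·B_h⁴·(4/(K_r·K_h) + 2/K_h + 2/K_r). -/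

import Mathlib

open MeasureTheory ProbabilityTheory
open scoped BigOperators

/-- The random CountSketch model on a probability space `(Ω, P)`: a random bucket
hash `η : Fin D → Fin K` and random signs `s : Fin D → {−1,+1}` such that the
signs are mutually independent and uniform on `{−1,+1}`, the bucket hash is
independent of the signs, and `P(η(i) = η(j)) = 1/K` for all `i ≠ j`. -/
structure CountSketchModel (Ω : Type*) [MeasurableSpace Ω] (P : MeasureTheory.Measure Ω)
    (D K : ℕ) where
  η : Ω → Fin D → Fin K
  s : Ω → Fin D → ℝ
  meas_η : Measurable η
  meas_s : Measurable s
  sign_val : ∀ ω i, s ω i = 1 ∨ s ω i = -1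
  sign_prob : ∀ i, P {ω | s ω i = 1} = 1 / 2
  sign_indep : iIndepFun (fun i ω => s ω i) P
  hash_indep_sign : IndepFun η s P
  collision : ∀ i j, i ≠ j → P {ω | η ω i = η ω j} = (K : ENNReal)⁻¹

/-- The CountSketch of `x ∈ ℝ^D`: `CS(x)_k = ∑_{i : η(i) = k} s(i)·x_i`. -/
def CountSketchModel.CS {Ω : Type*} [MeasurableSpace Ω] {P : MeasureTheory.Measure Ω}
    {D K : ℕ} (M : CountSketchModel Ω P D K) (ω : Ω) (x : Fin D → ℝ) :
    Fin K → ℝ :=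
  fun k => ∑ i, if M.η ω i = k then M.s ω i * x i else 0

/-- The variance `Var[f] = E[f²] - (E[f])²` of a real random variable. -/
noncomputable def var {Ω : Type*} [MeasurableSpace Ω] (P : Measure Ω) (f : Ω → ℝ) : ℝ :=
  (∫ ω, f ω ^ 2 ∂P) - (∫ ω, f ω ∂P) ^ 2

/-!
With `T i j = 1[η i = η j] s(i) s(j)` (`collisionSign`), the sketched inner product is
`∑ᵢⱼ aᵢ bⱼ T i j`. Since signs square to one, `s(i) s(j) s(k) s(l)` is the product of the signs
over `({i} ∆ {j}) ∆ ({k} ∆ {l})`; it is independent of the hash and has mean zero unless that set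
is empty, so `E[T i j T k l]` vanishes unless `(k, l)` pairs up with `(i, j)`, and each
off-diagonal pairing contributes the collision probability `1/K`. This gives
`Var ⟨CS a, CS b⟩ = (‖a‖²‖b‖² + ⟨a, b⟩² - 2 ∑ aᵢ²bᵢ²) / K`. For the independent channels `X`, `Y`,
`Var[XY] = E[X²] E[Y²] - (E X)² (E Y)²`, which expands to the bound.
-/

lemma var_mul_of_indepFun {Ω : Type*} [MeasurableSpace Ω] {P : Measure Ω} {X Y : Ω → ℝ}
    (hXY : IndepFun X Y P) (hX : Measurable X) (hY : Measurable Y) :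
    var P (fun ω => X ω * Y ω)
      = (∫ ω, X ω ^ 2 ∂P) * (∫ ω, Y ω ^ 2 ∂P) - ((∫ ω, X ω ∂P) * ∫ ω, Y ω ∂P) ^ 2 := by
  have hXY2 : IndepFun (fun ω => X ω ^ 2) (fun ω => Y ω ^ 2) P :=
    hXY.comp (measurable_id.pow_const 2) (measurable_id.pow_const 2)
  simp only [var, mul_pow]
  rw [hXY2.integral_fun_mul_eq_mul_integral (hX.pow_const 2).aestronglyMeasurable
      (hY.pow_const 2).aestronglyMeasurable,
    hXY.integral_fun_mul_eq_mul_integral hX.aestronglyMeasurable hY.aestronglyMeasurable]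
  ring

lemma var_mul_le_of_indepFun {Ω : Type*} [MeasurableSpace Ω] {P : Measure Ω} {X Y : Ω → ℝ}
    (hXY : IndepFun X Y P) (hX : Measurable X) (hY : Measurable Y) {Vx Vy : ℝ}
    (hVx : var P X ≤ Vx) (hVy : var P Y ≤ Vy) :
    var P (fun ω => X ω * Y ω)
      ≤ Vx * Vy + (∫ ω, X ω ∂P) ^ 2 * Vy + (∫ ω, Y ω ∂P) ^ 2 * Vx := by
  have hX2 : ∫ ω, X ω ^ 2 ∂P ≤ (∫ ω, X ω ∂P) ^ 2 + Vx := by rw [var] at hVx; linarith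
  have hY2 : ∫ ω, Y ω ^ 2 ∂P ≤ (∫ ω, Y ω ∂P) ^ 2 + Vy := by rw [var] at hVy; linarith
  have hX2_nonneg : 0 ≤ ∫ ω, X ω ^ 2 ∂P := integral_nonneg fun ω => sq_nonneg _
  calc var P (fun ω => X ω * Y ω)
      ≤ ((∫ ω, X ω ∂P) ^ 2 + Vx) * ((∫ ω, Y ω ∂P) ^ 2 + Vy)
          - ((∫ ω, X ω ∂P) * ∫ ω, Y ω ∂P) ^ 2 := by
        rw [var_mul_of_indepFun hXY hX hY]
        gcongr
        linarith
    _ = _ := by ring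

lemma integral_sum_mul_sq {Ω ι : Type*} [MeasurableSpace Ω] {P : Measure Ω} (s : Finset ι)
    (c : ι → ℝ) (f : ι → Ω → ℝ) (hf : ∀ p q, Integrable (fun ω => f p ω * f q ω) P) :
    ∫ ω, (∑ p ∈ s, c p * f p ω) ^ 2 ∂P
      = ∑ p ∈ s, ∑ q ∈ s, c p * c q * ∫ ω, f p ω * f q ω ∂P := by
  have hterm : ∀ p q, Integrable (fun ω => c p * f p ω * (c q * f q ω)) P := fun p q => by
    simpa only [mul_mul_mul_comm] using (hf p q).const_mul (c p * c q)
  simp only [sq, Finset.sum_mul_sum]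
  rw [integral_finsetSum _ fun p _ => integrable_finsetSum _ fun q _ => hterm p q]
  refine Finset.sum_congr rfl fun p _ => ?_
  rw [integral_finsetSum _ fun q _ => hterm p q]
  refine Finset.sum_congr rfl fun q _ => ?_
  rw [← integral_const_mul]
  simp only [mul_mul_mul_comm]

lemma sum_mul_pairing {ι : Type*} [Fintype ι] [DecidableEq ι] (a b : ι → ℝ) (κ : ℝ) :
    ∑ i, ∑ j, ∑ k, ∑ l, a i * b j * (a k * b l) * (if i = j then (if k = l then 1 else 0)
        else κ * ((if k = i ∧ l = j then 1 else 0) + (if k = j ∧ l = i then 1 else 0)))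
      = (∑ i, a i * b i) ^ 2 + κ * ((∑ i, a i ^ 2) * (∑ i, b i ^ 2) + (∑ i, a i * b i) ^ 2
          - 2 * ∑ i, (a i * b i) ^ 2) := by
  have hinner : ∀ i j, ∑ k, ∑ l, a i * b j * (a k * b l) * (if i = j then (if k = l then 1 else 0)
        else κ * ((if k = i ∧ l = j then 1 else 0) + (if k = j ∧ l = i then 1 else 0)))
      = κ * (a i * b j * (a i * b j + a j * b i))
        + if i = j then a i * b i * ∑ k, a k * b k - κ * (2 * (a i * b i) ^ 2) else 0 := by
    intro i j
    split_ifs with h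
    · subst h
      simp only [mul_ite, mul_one, mul_zero, Finset.sum_ite_eq, Finset.mem_univ, if_true,
        ← Finset.mul_sum]
      ring
    · simp only [ite_and, mul_add, mul_ite, mul_one, mul_zero, Finset.sum_add_distrib,
        Finset.sum_ite_irrel, Finset.sum_ite_eq', Finset.mem_univ, if_true,
        Finset.sum_const_zero, add_zero]
      ring
  have hfull : ∑ i, ∑ j, a i * b j * (a i * b j + a j * b i)
      = (∑ i, a i ^ 2) * (∑ i, b i ^ 2) + (∑ i, a i * b i) ^ 2 := by
    simp only [sq, Finset.sum_mul_sum, mul_add, Finset.sum_add_distrib]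
    congr 1 <;> exact Finset.sum_congr rfl fun i _ => Finset.sum_congr rfl fun j _ => by ring
  simp only [hinner, Finset.sum_add_distrib, Finset.sum_ite_eq, Finset.mem_univ, if_true,
    ← Finset.mul_sum, hfull, Finset.sum_sub_distrib, ← Finset.sum_mul]
  ring

lemma Finset.symmDiff_singleton_eq_symmDiff_singleton_iff {α : Type*} [DecidableEq α]
    {i j k l : α} :
    symmDiff {i} {j} = symmDiff ({k} : Finset α) {l}
      ↔ i = j ∧ k = l ∨ i ≠ j ∧ (k = i ∧ l = j ∨ k = j ∧ l = i) := by
  simp only [Finset.ext_iff, Finset.mem_symmDiff, Finset.mem_singleton]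
  constructor
  · intro h
    have hi := h i; have hj := h j; have hk := h k; have hl := h l
    by_cases hij : i = j <;> by_cases hkl : k = l <;> grind
  · rintro (⟨rfl, rfl⟩ | ⟨-, ⟨rfl, rfl⟩ | ⟨rfl, rfl⟩⟩) t <;> tauto

lemma sum_sq_mul_sum_sq_le_of_sqrt_le {ι : Type*} [Fintype ι] {a b : ι → ℝ} {B : ℝ}
    (ha : √(∑ i, a i ^ 2) ≤ B) (hb : √(∑ i, b i ^ 2) ≤ B) :
    (∑ i, a i ^ 2) * (∑ i, b i ^ 2) ≤ B ^ 4 := by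
  obtain ⟨-, ha⟩ := Real.sqrt_le_iff.1 ha
  obtain ⟨-, hb⟩ := Real.sqrt_le_iff.1 hb
  calc (∑ i, a i ^ 2) * (∑ i, b i ^ 2) ≤ B ^ 2 * B ^ 2 := by gcongr
    _ = B ^ 4 := by ring

namespace CountSketchModel

variable {Ω : Type*} [MeasurableSpace Ω] {P : Measure Ω} {D K : ℕ}
  (M : CountSketchModel Ω P D K)

lemma sign_mul_self (ω : Ω) (i : Fin D) : M.s ω i * M.s ω i = 1 := by
  rcases M.sign_val ω i with h | h <;> simp [h]

lemma measurable_sign (i : Fin D) : Measurable fun ω => M.s ω i :=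
  (measurable_pi_apply i).comp M.meas_s

lemma integral_sign [IsProbabilityMeasure P] (i : Fin D) : ∫ ω, M.s ω i ∂P = 0 := by
  have hset : MeasurableSet {ω | M.s ω i = 1} := M.measurable_sign i (measurableSet_singleton 1)
  have hs : (fun ω => M.s ω i) = fun ω => 2 * {ω | M.s ω i = 1}.indicator 1 ω - 1 := by
    ext ω
    rcases M.sign_val ω i with h | h <;> norm_num [h, Set.indicator_apply]
  have hint : Integrable ({ω | M.s ω i = 1}.indicator (1 : Ω → ℝ)) P :=
    (integrable_const 1).indicator hset
  rw [hs, integral_sub (hint.const_mul 2) (integrable_const 1),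
    integral_const_mul, integral_indicator_one hset, measureReal_def, M.sign_prob i]
  norm_num

def signProd (S : Finset (Fin D)) (ω : Ω) : ℝ := ∏ t ∈ S, M.s ω t

lemma signProd_mul_signProd (S T : Finset (Fin D)) (ω : Ω) :
    M.signProd S ω * M.signProd T ω = M.signProd (symmDiff S T) ω := by
  rw [signProd, signProd, signProd, ← Fintype.prod_ite_mem S, ← Fintype.prod_ite_mem T,
    ← Fintype.prod_ite_mem (symmDiff S T), ← Finset.prod_mul_distrib]
  refine Finset.prod_congr rfl fun t _ => ?_
  by_cases hS : t ∈ S <;> by_cases hT : t ∈ T <;>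
    simp [Finset.mem_symmDiff, hS, hT, M.sign_mul_self]

lemma integral_signProd [IsProbabilityMeasure P] (S : Finset (Fin D)) :
    ∫ ω, M.signProd S ω ∂P = if S = ∅ then 1 else 0 := by
  have := M.sign_indep.integral_fun_prod_comp (f := fun t x => if t ∈ S then x else (1 : ℝ))
    (fun i => (M.measurable_sign i).aemeasurable)
    (fun i => by split_ifs <;> fun_prop)
  simp only [signProd, ← Fintype.prod_ite_mem S]
  have hfactor : ∀ t, (∫ ω, (if t ∈ S then M.s ω t else 1) ∂P) = if t ∈ S then 0 else 1 := by
    intro t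
    split_ifs <;> simp [M.integral_sign]
  rw [this, Finset.prod_congr rfl fun t _ => hfactor t, Fintype.prod_ite_mem]
  simp [Finset.prod_const, zero_pow_eq, Finset.card_eq_zero]

lemma integral_hash_mul_signProd [IsProbabilityMeasure P] {g : (Fin D → Fin K) → ℝ}
    (hg : Measurable g) (S : Finset (Fin D)) :
    ∫ ω, g (M.η ω) * M.signProd S ω ∂P = (∫ ω, g (M.η ω) ∂P) * if S = ∅ then 1 else 0 := by
  have hprod : Measurable fun v : Fin D → ℝ => ∏ t ∈ S, v t := by fun_prop
  rw [← M.integral_signProd S]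
  exact (M.hash_indep_sign.comp hg hprod).integral_fun_mul_eq_mul_integral
    (hg.comp M.meas_η).aestronglyMeasurable (hprod.comp M.meas_s).aestronglyMeasurable

lemma sign_mul_sign (i j : Fin D) (ω : Ω) :
    M.s ω i * M.s ω j = M.signProd (symmDiff {i} {j}) ω := by
  rw [← M.signProd_mul_signProd, signProd, signProd, Finset.prod_singleton,
    Finset.prod_singleton]

def collisionSign (i j : Fin D) (ω : Ω) : ℝ :=
  (if M.η ω i = M.η ω j then 1 else 0) * (M.s ω i * M.s ω j)

lemma collisionSign_self (i : Fin D) (ω : Ω) : M.collisionSign i i ω = 1 := by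
  simp [collisionSign, M.sign_mul_self]

lemma measurable_collisionSign (i j : Fin D) : Measurable (M.collisionSign i j) :=
  ((measurable_of_finite fun v : Fin D → Fin K => if v i = v j then (1 : ℝ) else 0).comp
    M.meas_η).mul ((M.measurable_sign i).mul (M.measurable_sign j))

lemma abs_collisionSign_le (i j : Fin D) (ω : Ω) : |M.collisionSign i j ω| ≤ 1 := by
  unfold collisionSign
  rcases M.sign_val ω i with h | h <;> rcases M.sign_val ω j with h' | h' <;>
    split_ifs <;> simp [h, h']

lemma integrable_collisionSign [IsFiniteMeasure P] (i j : Fin D) :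
    Integrable (M.collisionSign i j) P :=
  Integrable.of_bound (M.measurable_collisionSign i j).aestronglyMeasurable 1
    (ae_of_all _ fun ω => M.abs_collisionSign_le i j ω)

lemma integrable_collisionSign_mul [IsFiniteMeasure P] (i j k l : Fin D) :
    Integrable (fun ω => M.collisionSign i j ω * M.collisionSign k l ω) P :=
  Integrable.of_bound ((M.measurable_collisionSign i j).mul
    (M.measurable_collisionSign k l)).aestronglyMeasurable 1 (ae_of_all _ fun ω => by
      rw [Real.norm_eq_abs, abs_mul]
      exact mul_le_one₀ (M.abs_collisionSign_le i j ω) (abs_nonneg _)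
        (M.abs_collisionSign_le k l ω))

lemma inner_CS_eq_sum_collisionSign (a b : Fin D → ℝ) (ω : Ω) :
    ∑ k, M.CS ω a k * M.CS ω b k = ∑ i, ∑ j, a i * b j * M.collisionSign i j ω := by
  simp only [CS, Finset.sum_mul_sum, collisionSign]
  rw [Finset.sum_comm]
  refine Finset.sum_congr rfl fun i _ => ?_
  rw [Finset.sum_comm]
  refine Finset.sum_congr rfl fun j _ => ?_
  simp only [ite_mul, mul_ite, zero_mul, mul_zero, Finset.sum_ite_eq, Finset.mem_univ, if_true]
  split_ifs <;> ring

lemma exists_inner_CS_eq_comp (a b : Fin D → ℝ) :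
    ∃ φ : (Fin D → Fin K) × (Fin D → ℝ) → ℝ, Measurable φ ∧
      (fun ω => ∑ k, M.CS ω a k * M.CS ω b k) = φ ∘ fun ω => (M.η ω, M.s ω) := by
  refine ⟨fun p => ∑ i, ∑ j, a i * b j * ((if p.1 i = p.1 j then 1 else 0) * (p.2 i * p.2 j)),
    Finset.measurable_sum _ fun i _ => Finset.measurable_sum _ fun j _ => ?_, ?_⟩
  · have hcoll : Measurable fun v : Fin D → Fin K => if v i = v j then (1 : ℝ) else 0 :=
      measurable_of_finite _
    exact ((hcoll.comp measurable_fst).fun_mul (by fun_prop)).const_mul _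
  ext ω
  exact M.inner_CS_eq_sum_collisionSign a b ω

lemma measurable_inner_CS (a b : Fin D → ℝ) :
    Measurable fun ω => ∑ k, M.CS ω a k * M.CS ω b k := by
  obtain ⟨φ, hφ, hX⟩ := M.exists_inner_CS_eq_comp a b
  rw [hX]
  exact hφ.comp (M.meas_η.prodMk M.meas_s)

lemma measureReal_collision {i j : Fin D} (hij : i ≠ j) :
    P.real {ω | M.η ω i = M.η ω j} = (K : ℝ)⁻¹ := by
  rw [measureReal_def, M.collision i j hij, ENNReal.toReal_inv, ENNReal.toReal_natCast]

lemma collisionSign_mul_collisionSign (i j k l : Fin D) (ω : Ω) :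
    M.collisionSign i j ω * M.collisionSign k l ω
      = (if M.η ω i = M.η ω j ∧ M.η ω k = M.η ω l then 1 else 0)
        * M.signProd (symmDiff (symmDiff {i} {j}) (symmDiff {k} {l})) ω := by
  rw [← M.signProd_mul_signProd, ← M.sign_mul_sign, ← M.sign_mul_sign]
  simp only [collisionSign]
  split_ifs <;> simp_all

lemma integral_collisionSign_mul_collisionSign_eq_measureReal [IsProbabilityMeasure P]
    (i j k l : Fin D) :
    ∫ ω, M.collisionSign i j ω * M.collisionSign k l ω ∂P
      = P.real {ω | M.η ω i = M.η ω j ∧ M.η ω k = M.η ω l}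
        * if symmDiff {i} {j} = symmDiff ({k} : Finset (Fin D)) {l} then 1 else 0 := by
  simp_rw [M.collisionSign_mul_collisionSign]
  rw [M.integral_hash_mul_signProd (g := fun v => if v i = v j ∧ v k = v l then 1 else 0)
    (measurable_of_finite _)]
  have hset : MeasurableSet {ω | M.η ω i = M.η ω j ∧ M.η ω k = M.η ω l} :=
    M.meas_η (Set.toFinite {v : Fin D → Fin K | v i = v j ∧ v k = v l}).measurableSet
  rw [← integral_indicator_one hset]
  simp only [← Finset.bot_eq_empty, symmDiff_eq_bot, Set.indicator_apply, Set.mem_ofPred_eq,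
    Pi.one_apply]

lemma integral_collisionSign_mul_collisionSign [IsProbabilityMeasure P] (i j k l : Fin D) :
    ∫ ω, M.collisionSign i j ω * M.collisionSign k l ω ∂P
      = if i = j then (if k = l then 1 else 0)
        else (K : ℝ)⁻¹
          * ((if k = i ∧ l = j then 1 else 0) + (if k = j ∧ l = i then 1 else 0)) := by
  rw [M.integral_collisionSign_mul_collisionSign_eq_measureReal]
  by_cases hpair : symmDiff {i} {j} = symmDiff ({k} : Finset (Fin D)) {l}
  · rw [if_pos hpair]
    obtain ⟨rfl, rfl⟩ | ⟨hij, ⟨rfl, rfl⟩ | ⟨rfl, rfl⟩⟩ :=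
      Finset.symmDiff_singleton_eq_symmDiff_singleton_iff.1 hpair
    · simp
    · simp [hij, M.measureReal_collision hij]
    · simp [hij, Ne.symm hij, eq_comm, M.measureReal_collision (Ne.symm hij)]
  · rw [if_neg hpair, mul_zero]
    have := mt Finset.symmDiff_singleton_eq_symmDiff_singleton_iff.2 hpair
    split_ifs <;> simp_all

lemma integral_collisionSign [IsProbabilityMeasure P] (i j : Fin D) :
    ∫ ω, M.collisionSign i j ω ∂P = if i = j then 1 else 0 := by
  have h := M.integral_collisionSign_mul_collisionSign i j i i
  simp only [M.collisionSign_self, mul_one] at h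
  rw [h]
  split_ifs <;> simp_all

lemma integral_inner_CS [IsProbabilityMeasure P] (a b : Fin D → ℝ) :
    ∫ ω, ∑ k, M.CS ω a k * M.CS ω b k ∂P = ∑ i, a i * b i := by
  simp_rw [M.inner_CS_eq_sum_collisionSign]
  rw [integral_finsetSum _ fun i _ => integrable_finsetSum _ fun j _ =>
    (M.integrable_collisionSign i j).const_mul _]
  refine Finset.sum_congr rfl fun i _ => ?_
  rw [integral_finsetSum _ fun j _ => (M.integrable_collisionSign i j).const_mul _]
  simp [integral_const_mul, M.integral_collisionSign]

lemma integral_inner_CS_sq [IsProbabilityMeasure P] (a b : Fin D → ℝ) :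
    ∫ ω, (∑ k, M.CS ω a k * M.CS ω b k) ^ 2 ∂P
      = (∑ i, a i * b i) ^ 2 + (K : ℝ)⁻¹ * ((∑ i, a i ^ 2) * (∑ i, b i ^ 2)
          + (∑ i, a i * b i) ^ 2 - 2 * ∑ i, (a i * b i) ^ 2) := by
  simp_rw [M.inner_CS_eq_sum_collisionSign, ← Fintype.sum_prod_type']
  refine (integral_sum_mul_sq Finset.univ (fun p : Fin D × Fin D => a p.1 * b p.2)
    (fun p => M.collisionSign p.1 p.2)
    fun p q => M.integrable_collisionSign_mul p.1 p.2 q.1 q.2).trans ?_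
  simp only [Fintype.sum_prod_type, M.integral_collisionSign_mul_collisionSign]
  exact sum_mul_pairing a b _

lemma var_inner_CS [IsProbabilityMeasure P] (a b : Fin D → ℝ) :
    var P (fun ω => ∑ k, M.CS ω a k * M.CS ω b k)
      = ((∑ i, a i ^ 2) * (∑ i, b i ^ 2) + (∑ i, a i * b i) ^ 2
          - 2 * ∑ i, (a i * b i) ^ 2) / K := by
  rw [var, M.integral_inner_CS_sq, M.integral_inner_CS]
  ring

lemma var_inner_CS_le [IsProbabilityMeasure P] (a b : Fin D → ℝ) :
    var P (fun ω => ∑ k, M.CS ω a k * M.CS ω b k)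
      ≤ ((∑ i, a i ^ 2) * (∑ i, b i ^ 2) + (∑ i, a i * b i) ^ 2) / K := by
  rw [M.var_inner_CS]
  gcongr
  have : 0 ≤ ∑ i, (a i * b i) ^ 2 := by positivity
  linarith

end CountSketchModel

lemma indepFun_inner_CS {Ω : Type*} [MeasurableSpace Ω] {P : Measure Ω} {D₁ D₂ K₁ K₂ : ℕ}
    (M₁ : CountSketchModel Ω P D₁ K₁) (M₂ : CountSketchModel Ω P D₂ K₂)
    (hindep : IndepFun (fun ω => (M₁.η ω, M₁.s ω)) (fun ω => (M₂.η ω, M₂.s ω)) P)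
    (a b : Fin D₁ → ℝ) (c d : Fin D₂ → ℝ) :
    IndepFun (fun ω => ∑ k, M₁.CS ω a k * M₁.CS ω b k)
      (fun ω => ∑ k, M₂.CS ω c k * M₂.CS ω d k) P := by
  obtain ⟨φ₁, hφ₁, h₁⟩ := M₁.exists_inner_CS_eq_comp a b
  obtain ⟨φ₂, hφ₂, h₂⟩ := M₂.exists_inner_CS_eq_comp c d
  rw [h₁, h₂]
  exact hindep.comp hφ₁ hφ₂

theorem rh_channel_variance_bound_general
    {Ω : Type*} [MeasurableSpace Ω] (P : Measure Ω) [IsProbabilityMeasure P]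
    (D₁ D₂ Kr Kh : ℕ)
    (Br Bh : ℝ)
    (Mr : CountSketchModel Ω P D₁ Kr) (Mh : CountSketchModel Ω P D₂ Kh)
    (hindep : IndepFun (fun ω => (Mr.η ω, Mr.s ω)) (fun ω => (Mh.η ω, Mh.s ω)) P)
    (rq ri : Fin D₁ → ℝ) (hq hi : Fin D₂ → ℝ)
    (hrq : Real.sqrt (∑ i, rq i ^ 2) ≤ Br) (hri : Real.sqrt (∑ i, ri i ^ 2) ≤ Br)
    (hhq : Real.sqrt (∑ i, hq i ^ 2) ≤ Bh) (hhi : Real.sqrt (∑ i, hi i ^ 2) ≤ Bh) :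
    (var P (fun ω =>
          (∑ k, Mr.CS ω rq k * Mr.CS ω ri k) * (∑ k, Mh.CS ω hq k * Mh.CS ω hi k))
        ≤ ((∑ i, rq i ^ 2) * (∑ i, ri i ^ 2) + (∑ i, rq i * ri i) ^ 2) / Kr
              * (((∑ i, hq i ^ 2) * (∑ i, hi i ^ 2) + (∑ i, hq i * hi i) ^ 2) / Kh)
          + (∑ i, rq i * ri i) ^ 2
              * (((∑ i, hq i ^ 2) * (∑ i, hi i ^ 2) + (∑ i, hq i * hi i) ^ 2) / Kh)
          + (∑ i, hq i * hi i) ^ 2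
              * (((∑ i, rq i ^ 2) * (∑ i, ri i ^ 2) + (∑ i, rq i * ri i) ^ 2) / Kr))
    ∧ var P (fun ω =>
          (∑ k, Mr.CS ω rq k * Mr.CS ω ri k) * (∑ k, Mh.CS ω hq k * Mh.CS ω hi k))
        ≤ Br ^ 4 * Bh ^ 4 * (4 / ((Kr : ℝ) * Kh) + 2 / Kh + 2 / Kr) := by
  have hvar := var_mul_le_of_indepFun (indepFun_inner_CS Mr Mh hindep rq ri hq hi)
    (Mr.measurable_inner_CS rq ri) (Mh.measurable_inner_CS hq hi)
    (Mr.var_inner_CS_le rq ri) (Mh.var_inner_CS_le hq hi)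
  rw [Mr.integral_inner_CS, Mh.integral_inner_CS] at hvar
  refine ⟨hvar, hvar.trans ?_⟩
  have hr := sum_sq_mul_sum_sq_le_of_sqrt_le hrq hri
  have hh := sum_sq_mul_sum_sq_le_of_sqrt_le hhq hhi
  have hα := (Finset.sum_mul_sq_le_sq_mul_sq Finset.univ rq ri).trans hr
  have hβ := (Finset.sum_mul_sq_le_sq_mul_sq Finset.univ hq hi).trans hh
  calc _ ≤ (2 * Br ^ 4) / Kr * ((2 * Bh ^ 4) / Kh) + Br ^ 4 * ((2 * Bh ^ 4) / Kh)
        + Bh ^ 4 * ((2 * Br ^ 4) / Kr) := by gcongr <;> linarith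
    _ = Br ^ 4 * Bh ^ 4 * (4 / ((Kr : ℝ) * Kh) + 2 / Kh + 2 / Kr) := by ring

/-- RH-channel variance bound: for independent CountSketches
`CS_r : ℝ^{D₁} → ℝ^{K_r}`, `CS_h : ℝ^{D₂} → ℝ^{K_h}` and bounded vectors
`‖r̃^q‖, ‖r̃^i‖ ≤ B_r̃`, `‖h^q‖, ‖h^i‖ ≤ B_h`, the estimator
`Î_RH = ⟨CS_r(r̃^q), CS_r(r̃^i)⟩·⟨CS_h(h^q), CS_h(h^i)⟩` satisfies
`Var[Î_RH] ≤ V_r·V_h + α²·V_h + β²·V_r` and in particular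
`Var[Î_RH] ≤ B_r̃⁴·B_h⁴·(4/(K_r·K_h) + 2/K_h + 2/K_r)`. -/
theorem rh_channel_variance_bound
    {Ω : Type*} [MeasurableSpace Ω] (P : Measure Ω) [IsProbabilityMeasure P]
    (D₁ D₂ Kr Kh : ℕ) (hD₁ : 0 < D₁) (hD₂ : 0 < D₂) (hKr : 0 < Kr) (hKh : 0 < Kh)
    (Br Bh : ℝ) (hBr : 0 < Br) (hBh : 0 < Bh)
    (Mr : CountSketchModel Ω P D₁ Kr) (Mh : CountSketchModel Ω P D₂ Kh)
    (hindep : IndepFun (fun ω => (Mr.η ω, Mr.s ω)) (fun ω => (Mh.η ω, Mh.s ω)) P)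
    (rq ri : Fin D₁ → ℝ) (hq hi : Fin D₂ → ℝ)
    (hrq : Real.sqrt (∑ i, rq i ^ 2) ≤ Br) (hri : Real.sqrt (∑ i, ri i ^ 2) ≤ Br)
    (hhq : Real.sqrt (∑ i, hq i ^ 2) ≤ Bh) (hhi : Real.sqrt (∑ i, hi i ^ 2) ≤ Bh) :
    (var P (fun ω =>
          (∑ k, Mr.CS ω rq k * Mr.CS ω ri k) * (∑ k, Mh.CS ω hq k * Mh.CS ω hi k))
        ≤ ((∑ i, rq i ^ 2) * (∑ i, ri i ^ 2) + (∑ i, rq i * ri i) ^ 2) / Kr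
              * (((∑ i, hq i ^ 2) * (∑ i, hi i ^ 2) + (∑ i, hq i * hi i) ^ 2) / Kh)
          + (∑ i, rq i * ri i) ^ 2
              * (((∑ i, hq i ^ 2) * (∑ i, hi i ^ 2) + (∑ i, hq i * hi i) ^ 2) / Kh)
          + (∑ i, hq i * hi i) ^ 2
              * (((∑ i, rq i ^ 2) * (∑ i, ri i ^ 2) + (∑ i, rq i * ri i) ^ 2) / Kr))
    ∧ var P (fun ω =>
          (∑ k, Mr.CS ω rq k * Mr.CS ω ri k) * (∑ k, Mh.CS ω hq k * Mh.CS ω hi k))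
        ≤ Br ^ 4 * Bh ^ 4 * (4 / ((Kr : ℝ) * Kh) + 2 / Kh + 2 / Kr) :=
  rh_channel_variance_bound_general P D₁ D₂ Kr Kh Br Bh Mr Mh hindep rq ri hq hi hrq hri hhq hhi
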